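/- Let S = ⟨b, b + t m_1, …, b + t m_n⟩ be a numerical semigroup, where b, t ∈ ℤ^+, n ≥ 2, and m_i = f_i · ∏_{j ≠ i, 1≤j≤n} c_j, with: (a) c_1,…,c_n ∈ ℕ pairwise relatively prime, (b) gcd(f_i, c_i) = 1 for all i ∈ {1,…,n}, (c) m_n > m_i for all i ∈ {1,…,n−1}, and (d) f_n = 1. Then L_S = ∪_{i=1}^{n−1} ( c_i (b + t m_i) + S ). -/

import Mathlib

/-! Two factorizations of the same length of an element of `S` have the same weighted sum
`∑ λ_i m_i`. As `c_i` divides `m_j` for `j ≠ i` and is coprime to `m_i`, this forces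
`λ_i ≡ ν_i (mod c_i)`; so if no coordinate `i < n` reaches `c_i`, the two factorizations agree
there, then in the `n`-th coordinate (as `m_n > 0`) and, by length, in the coordinate of `b`.
Conversely `c_i m_i = f_i c_n m_n` with `f_i c_n < c_i`, so `c_i` copies of `b + t m_i` can be
traded for `f_i c_n` copies of `b + t m_n` and `c_i - f_i c_n` copies of `b`. -/

/-- The `S`-degree of an exponent vector. -/
def degS {n : ℕ} {G : Type*} [AddCommMonoid G] (a : Fin n → G) (lam : Fin n → ℕ) : G :=
  ∑ i, lam i • a i

/-- The set of elements of `S = ⟨a_1,…,a_k⟩` having at least two different factorizations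
of the same length. -/
def LSet {n : ℕ} {G : Type*} [AddCommMonoid G] (a : Fin n → G) : Set G :=
  {x | ∃ lam nu : Fin n → ℕ, lam ≠ nu ∧ degS a lam = x ∧ degS a nu = x ∧
    ∑ i, lam i = ∑ i, nu i}

open Finset

section Factorizations

variable {n : ℕ} {G : Type*} [AddCommMonoid G] (a : Fin n → G)

lemma degS_add (x y : Fin n → ℕ) : degS a (x + y) = degS a x + degS a y := by
  simp only [degS, Pi.add_apply, add_smul, sum_add_distrib]

lemma degS_single (j : Fin n) (k : ℕ) : degS a (Pi.single j k) = k • a j := by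
  simp [degS, Pi.single_apply, ite_smul]

lemma mem_closure_range_iff_exists_degS {x : G} :
    x ∈ AddSubmonoid.closure (Set.range a) ↔ ∃ μ : Fin n → ℕ, x = degS a μ :=
  AddSubmonoid.mem_closure_range_iff_of_fintype

lemma exists_mem_closure_degS_eq_add {w : Fin n → ℕ} {j : Fin n} {c : ℕ} (h : c ≤ w j) :
    ∃ y ∈ AddSubmonoid.closure (Set.range a), degS a w = c • a j + y := by
  have hw : w = Pi.single j c + (w - Pi.single j c) := by
    rw [add_tsub_cancel_of_le]
    intro i
    rcases eq_or_ne i j with rfl | hi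
    · simpa using h
    · simp [hi]
  refine ⟨degS a (w - Pi.single j c), (mem_closure_range_iff_exists_degS a).2 ⟨_, rfl⟩, ?_⟩
  conv_lhs => rw [hw, degS_add, degS_single]

end Factorizations

section Weights

variable {n : ℕ} {cs fs m : Fin n → ℕ} (hm : ∀ i, m i = fs i * ∏ j ∈ univ.erase i, cs j)
include hm

lemma dvd_of_prod_erase {i j : Fin n} (hij : i ≠ j) : cs i ∣ m j :=
  hm j ▸ Dvd.dvd.mul_left (dvd_prod_of_mem cs (mem_erase.2 ⟨hij, mem_univ i⟩)) _

lemma coprime_of_prod_erase (hcs : ∀ i j, i ≠ j → (cs i).Coprime (cs j))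
    (hfc : ∀ i, (fs i).Coprime (cs i)) (i : Fin n) : (m i).Coprime (cs i) :=
  hm i ▸ (hfc i).mul_left (Nat.Coprime.prod_left fun j hj => hcs j i (ne_of_mem_erase hj))

lemma mul_eq_mul_of_prod_erase {k : Fin n} (hfk : fs k = 1) (i : Fin n) :
    cs i * m i = fs i * cs k * m k := by
  have hprod : ∀ j, cs j * ∏ l ∈ univ.erase j, cs l = ∏ l, cs l :=
    fun j => mul_prod_erase univ cs (mem_univ j)
  rw [hm i, hm k, hfk, one_mul, mul_assoc, hprod, mul_left_comm, hprod]

lemma lt_of_prod_erase {i k : Fin n} (hfk : fs k = 1) (hik : i ≠ k) (hlt : m i < m k) :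
    fs i * cs k < cs i := by
  have hmk : 0 < m k := (Nat.zero_le _).trans_lt hlt
  have hci : 0 < cs i := Nat.pos_of_dvd_of_pos (dvd_of_prod_erase hm hik) hmk
  refine Nat.lt_of_mul_lt_mul_right (a := m k) ?_
  calc fs i * cs k * m k = cs i * m i := (mul_eq_mul_of_prod_erase hm hfk i).symm
    _ < cs i * m k := Nat.mul_lt_mul_of_pos_left hlt hci

end Weights

section Uniqueness

variable {n : ℕ} {cs m u v : Fin n → ℕ}

lemma modEq_of_sum_mul_eq {c : ℕ} {i : Fin n} (hdvd : ∀ j, j ≠ i → c ∣ m j)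
    (hcop : (m i).Coprime c) (h : ∑ j, u j * m j = ∑ j, v j * m j) : u i ≡ v i [MOD c] := by
  have hmod : ∀ w : Fin n → ℕ, ∑ j, w j * m j ≡ w i * m i [MOD c] := by
    intro w
    rw [← add_sum_erase _ _ (mem_univ i)]
    conv_rhs => rw [← add_zero (w i * m i)]
    refine Nat.ModEq.add_left _ (Nat.modEq_zero_iff_dvd.2 (dvd_sum fun j hj => ?_))
    exact (hdvd j (ne_of_mem_erase hj)).mul_left _
  exact Nat.ModEq.cancel_right_of_coprime hcop.symm ((hmod u).symm.trans (h ▸ hmod v))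

lemma eq_of_sum_mul_eq {k : Fin n} (hk : 0 < m k) (hdvd : ∀ i j, i ≠ j → cs i ∣ m j)
    (hcop : ∀ i, (m i).Coprime (cs i)) (h : ∑ j, u j * m j = ∑ j, v j * m j)
    (hu : ∀ i, i ≠ k → u i < cs i) (hv : ∀ i, i ≠ k → v i < cs i) : u = v := by
  have hne : ∀ i, i ≠ k → u i = v i := fun i hi =>
    Nat.ModEq.eq_of_lt_of_lt (modEq_of_sum_mul_eq (fun j hj => hdvd i j hj.symm) (hcop i) h)
      (hu i hi) (hv i hi)
  have hrest : ∑ j ∈ univ.erase k, u j * m j = ∑ j ∈ univ.erase k, v j * m j :=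
    sum_congr rfl fun j hj => by rw [hne j (ne_of_mem_erase hj)]
  rw [← add_sum_erase _ _ (mem_univ k), ← add_sum_erase _ _ (mem_univ k), hrest] at h
  have hk' : u k = v k := Nat.eq_of_mul_eq_mul_right hk (Nat.add_right_cancel h)
  funext i
  by_cases hi : i = k
  · exact hi ▸ hk'
  · exact hne i hi

end Uniqueness

section ShiftedGenerators

variable {n : ℕ} {b t : ℕ} {m : Fin n → ℕ}

def shiftedGens (b t : ℕ) (m : Fin n → ℕ) : Fin (n + 1) → ℕ :=
  Fin.cons b fun i => b + t * m i

@[simp] lemma shiftedGens_zero : shiftedGens b t m 0 = b := rfl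

@[simp] lemma shiftedGens_succ (i : Fin n) : shiftedGens b t m i.succ = b + t * m i := rfl

lemma degS_shiftedGens (w : Fin (n + 1) → ℕ) :
    degS (shiftedGens b t m) w = (∑ j, w j) * b + t * ∑ i, w i.succ * m i := by
  simp only [degS, smul_eq_mul, Fin.sum_univ_succ, shiftedGens_zero, shiftedGens_succ, add_mul,
    sum_mul, mul_sum, mul_add, sum_add_distrib, add_assoc, mul_left_comm t]

lemma exists_mem_closure_of_mem_LSet {cs : Fin n → ℕ} {k : Fin n} (ht : 0 < t) (hk : 0 < m k)
    (hdvd : ∀ i j, i ≠ j → cs i ∣ m j) (hcop : ∀ i, (m i).Coprime (cs i)) {x : ℕ}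
    (hx : x ∈ LSet (shiftedGens b t m)) :
    ∃ i, i ≠ k ∧ ∃ y ∈ AddSubmonoid.closure (Set.range (shiftedGens b t m)),
      x = cs i * (b + t * m i) + y := by
  obtain ⟨lam, nu, hne, rfl, hnu, hlen⟩ := hx
  suffices ∃ i, i ≠ k ∧ (cs i ≤ lam i.succ ∨ cs i ≤ nu i.succ) by
    obtain ⟨i, hik, hle⟩ := this
    obtain ⟨y, hy, hdeg⟩ : ∃ y ∈ AddSubmonoid.closure (Set.range (shiftedGens b t m)),
        degS (shiftedGens b t m) lam = cs i • shiftedGens b t m i.succ + y := by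
      rcases hle with hle | hle
      · exact exists_mem_closure_degS_eq_add _ hle
      · exact hnu ▸ exists_mem_closure_degS_eq_add _ hle
    exact ⟨i, hik, y, hy, by simpa using hdeg⟩
  by_contra! hsmall
  have htail : ∑ i, Fin.tail lam i * m i = ∑ i, Fin.tail nu i * m i := by
    rw [degS_shiftedGens, degS_shiftedGens, hlen] at hnu
    exact (Nat.eq_of_mul_eq_mul_left ht (Nat.add_left_cancel hnu)).symm
  have htail_eq : Fin.tail lam = Fin.tail nu :=
    eq_of_sum_mul_eq hk hdvd hcop htail (fun i hi => (hsmall i hi).1) fun i hi => (hsmall i hi).2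
  have hhead : lam 0 = nu 0 := by
    rw [Fin.sum_univ_succ, Fin.sum_univ_succ] at hlen
    have : ∑ i : Fin n, Fin.tail lam i = ∑ i : Fin n, Fin.tail nu i := by rw [htail_eq]
    simp only [Fin.tail] at this
    omega
  exact hne (by rw [← Fin.cons_self_tail lam, ← Fin.cons_self_tail nu, hhead, htail_eq])

lemma add_mem_LSet_of_mul_eq_mul {i k : Fin n} (hik : i ≠ k) {c F : ℕ} (hFc : F < c)
    (hid : c * m i = F * m k) {y : ℕ}
    (hy : y ∈ AddSubmonoid.closure (Set.range (shiftedGens b t m))) :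
    c * (b + t * m i) + y ∈ LSet (shiftedGens b t m) := by
  obtain ⟨μ, rfl⟩ := (mem_closure_range_iff_exists_degS _).1 hy
  have hsucc : i.succ ≠ k.succ := fun h => hik (Fin.succ_injective _ h)
  refine ⟨Pi.single i.succ c + μ, Pi.single k.succ F + Pi.single 0 (c - F) + μ, ?_, ?_, ?_, ?_⟩
  · intro h
    have := congrFun h i.succ
    simp [hsucc, Fin.succ_ne_zero] at this
    omega
  · simp [degS_add, degS_single]
  · simp only [degS_add, degS_single, smul_eq_mul, shiftedGens_succ, shiftedGens_zero]
    calc F * (b + t * m k) + (c - F) * b + degS _ μ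
        = (F + (c - F)) * b + t * (F * m k) + degS _ μ := by ring
      _ = c * (b + t * m i) + degS _ μ := by rw [Nat.add_sub_cancel' hFc.le, ← hid]; ring
  · simp only [Pi.add_apply, sum_add_distrib, Pi.single_apply, sum_ite_eq', mem_univ, if_true]
    omega

end ShiftedGenerators

/-- **Proposition.** Let `S = ⟨b, b + t m_1, …, b + t m_n⟩` be a numerical semigroup with
`b, t ∈ ℤ⁺`, `n ≥ 2`, `m_i = f_i ∏_{j ≠ i} c_j`, where (a) the `c_i` are pairwise
relatively prime, (b) `gcd(f_i, c_i) = 1`, (c) `m_n > m_i` for `i < n`, (d) `f_n = 1`.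
Then `L_S = ∪_{i=1}^{n-1} (c_i (b + t m_i) + S)`. -/
theorem LSet_shifted_semigroup
    {n : ℕ} (hn : 2 ≤ n)
    (b t : ℕ) (ht : 0 < t)
    (cs fs m : Fin n → ℕ)
    (hm : ∀ i, m i = fs i * ∏ j ∈ Finset.univ.erase i, cs j)
    -- (a) pairwise relatively prime:
    (hcs : ∀ i j, i ≠ j → Nat.Coprime (cs i) (cs j))
    -- (b)
    (hfc : ∀ i, Nat.Coprime (fs i) (cs i))
    -- (c)
    (hmax : ∀ i : Fin n, (i : ℕ) + 1 < n → m i < m ⟨n - 1, by omega⟩)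
    -- (d)
    (hfn : fs ⟨n - 1, by omega⟩ = 1)
    -- the generating family `A = (b, b + t m_1, …, b + t m_n)`:
    (A : Fin (n + 1) → ℕ) (hA : A = Fin.cons b (fun i => b + t * m i)) :
    LSet A = {x | ∃ i : Fin n, (i : ℕ) + 1 < n ∧
      ∃ y ∈ AddSubmonoid.closure (Set.range A), x = cs i * (b + t * m i) + y} := by
  subst hA
  have hlast : ∀ i : Fin n, (i : ℕ) + 1 < n ↔ i ≠ ⟨n - 1, by omega⟩ := fun i => by
    rw [Ne, Fin.ext_iff]
    change _ ↔ ¬(i : ℕ) = n - 1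
    omega
  have hpos : 0 < m ⟨n - 1, by omega⟩ :=
    (Nat.zero_le _).trans_lt (hmax ⟨0, by omega⟩ (show 0 + 1 < n by omega))
  ext x
  constructor
  · intro hx
    obtain ⟨i, hi, hy⟩ := exists_mem_closure_of_mem_LSet ht hpos
      (fun _ _ => dvd_of_prod_erase hm) (coprime_of_prod_erase hm hcs hfc) hx
    exact ⟨i, (hlast i).2 hi, hy⟩
  · rintro ⟨i, hi, y, hy, rfl⟩
    have hik := (hlast i).1 hi
    exact add_mem_LSet_of_mul_eq_mul hik (lt_of_prod_erase hm hfn hik (hmax i hi))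
      (mul_eq_mul_of_prod_erase hm hfn i) hy
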